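/- If G is a simple graph of order n ≥ 2 whose complement has a balanced bipartite component, then q₂(G) = n − 2. -/

import Mathlib

open Matrix SimpleGraph
open scoped Classical

/-- The `k`-th largest eigenvalue (1-indexed, counted with multiplicity) of a real
symmetric (Hermitian) matrix; junk value `0` if `M` is not Hermitian or `k` is out of range. -/
noncomputable def kthEig {V : Type*} [Fintype V] [DecidableEq V]
    (M : Matrix V V ℝ) (k : ℕ) : ℝ :=
  if hM : M.IsHermitian then
    if h : k - 1 < Fintype.card V then
      letI f : Fin (Fintype.card V) → ℝ := hM.eigenvalues ∘ (Fintype.equivFin V).symm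
      (f ∘ Tuple.sort f) (Fin.rev ⟨k - 1, h⟩)
    else 0
  else 0

/-- The signless Laplacian `Q(G) = D(G) + A(G)` of a simple graph `G`. -/
noncomputable def signlessLap {V : Type*} [Fintype V] [DecidableEq V]
    (G : SimpleGraph V) [DecidableRel G.Adj] : Matrix V V ℝ :=
  G.degMatrix ℝ + G.adjMatrix ℝ

/-- `qEig G k` is the `k`-th largest signless Laplacian eigenvalue `q_k(G)`. -/
noncomputable def qEig {V : Type*} [Fintype V] [DecidableEq V]
    (G : SimpleGraph V) [DecidableRel G.Adj] (k : ℕ) : ℝ :=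
  kthEig (signlessLap G) k

/-- `c` is a bipartite connected component of `H`: the vertex set of the component splits
into two disjoint classes `U`, `W` such that every edge of the component joins `U` and `W`. -/
def IsBipartiteComponent {V : Type*} (H : SimpleGraph V) (c : H.ConnectedComponent) : Prop :=
  ∃ U W : Set V, U ∪ W = c.supp ∧ Disjoint U W ∧
    ∀ ⦃u v : V⦄, u ∈ c.supp → H.Adj u v → (u ∈ U ∧ v ∈ W) ∨ (u ∈ W ∧ v ∈ U)

/-- `c` is a balanced bipartite connected component of `H`: bipartite with vertex classes
of equal size. -/
def IsBalancedBipartiteComponent {V : Type*} (H : SimpleGraph V)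
    (c : H.ConnectedComponent) : Prop :=
  ∃ U W : Set V, U ∪ W = c.supp ∧ Disjoint U W ∧ U.ncard = W.ncard ∧
    ∀ ⦃u v : V⦄, u ∈ c.supp → H.Adj u v → (u ∈ U ∧ v ∈ W) ∨ (u ∈ W ∧ v ∈ U)

/-- `G` is the complete multipartite graph whose parts are the fibers of `p`:
two vertices are adjacent iff they lie in different parts. -/
def IsCompleteMultipartiteWith {V ι : Type*} (G : SimpleGraph V) (p : V → ι) : Prop :=
  ∀ u v : V, G.Adj u v ↔ p u ≠ p v

/-!
Since `Q(G) + Q(Gᶜ) = (n - 2) I + J` and `Q(Gᶜ)` is positive semidefinite,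
`xᵀ Q(G) x ≤ (n - 2) ‖x‖²` on the hyperplane `𝟙ᗮ`, so by Courant–Fischer `q₂(G) ≤ n - 2`.
Conversely, let `U`, `W` be the classes of a balanced bipartite component of `Gᶜ`. Every edge of
`Gᶜ` meeting `U ∪ W` joins `U` to `W`, so for `x = a 𝟙_U + b 𝟙_W` we get
`xᵀ Q(Gᶜ) x ≤ (a + b)² |U| |W| = (𝟙ᵀ x)²`, the equality being where balance is used. Hence
`xᵀ Q(G) x ≥ (n - 2) ‖x‖²` on the plane spanned by `𝟙_U` and `𝟙_W`, and Courant–Fischer gives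
`q₂(G) ≥ n - 2`.
-/

open Module Finset

namespace OrthonormalBasis

variable {ι 𝕜 E : Type*} [Fintype ι] [RCLike 𝕜] [NormedAddCommGroup E] [InnerProductSpace 𝕜 E]

theorem exists_mem_ne_zero_forall_repr_eq_zero [FiniteDimensional 𝕜 E]
    (b : OrthonormalBasis ι 𝕜 E) (W : Submodule 𝕜 E) (s : Finset ι) (hs : #s < finrank 𝕜 W) :
    ∃ v ∈ W, v ≠ 0 ∧ ∀ i ∈ s, b.repr v i = 0 := by
  let f : W →ₗ[𝕜] s → 𝕜 :=
    LinearMap.pi (fun i : s => (EuclideanSpace.proj (i : ι)).toLinearMap ∘ₗ b.repr.toLinearMap)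
      ∘ₗ W.subtype
  obtain ⟨⟨v, hvW⟩, hv, hv0⟩ :=
    Submodule.exists_mem_ne_zero_of_ne_bot (f.ker_ne_bot_of_finrank_lt (by simpa using hs))
  refine ⟨v, hvW, by simpa using hv0, fun i hi => ?_⟩
  simpa [f] using congrFun (LinearMap.mem_ker.mp hv) ⟨i, hi⟩

end OrthonormalBasis

namespace LinearMap.IsSymmetric

variable {𝕜 E : Type*} [RCLike 𝕜] [NormedAddCommGroup E] [InnerProductSpace 𝕜 E]
  [FiniteDimensional 𝕜 E] {T : E →ₗ[𝕜] E} (hT : T.IsSymmetric) {n : ℕ} (hn : finrank 𝕜 E = n)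

theorem re_inner_apply_self_eq_sum (v : E) :
    RCLike.re (inner 𝕜 (T v) v) =
      ∑ i, hT.eigenvalues hn i * ‖(hT.eigenvectorBasis hn).repr v i‖ ^ 2 := by
  rw [← (hT.eigenvectorBasis hn).repr.inner_map_map, PiLp.inner_apply, map_sum]
  refine Finset.sum_congr rfl fun i _ => ?_
  rw [hT.eigenvectorBasis_apply_self_apply, ← smul_eq_mul, inner_smul_left,
    inner_self_eq_norm_sq_to_K, RCLike.conj_ofReal, ← RCLike.ofReal_pow, ← RCLike.ofReal_mul,
    RCLike.ofReal_re]

theorem norm_sq_eq_sum_repr (v : E) : ‖v‖ ^ 2 = ∑ i, ‖(hT.eigenvectorBasis hn).repr v i‖ ^ 2 := by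
  rw [← EuclideanSpace.norm_sq_eq, LinearIsometryEquiv.norm_map]

theorem re_inner_apply_self_le_of_repr_eq_zero {i : Fin n} {v : E}
    (hv : ∀ j < i, (hT.eigenvectorBasis hn).repr v j = 0) :
    RCLike.re (inner 𝕜 (T v) v) ≤ hT.eigenvalues hn i * ‖v‖ ^ 2 := by
  rw [hT.re_inner_apply_self_eq_sum hn, hT.norm_sq_eq_sum_repr hn, mul_sum]
  refine sum_le_sum fun j _ => ?_
  rcases lt_or_ge j i with hj | hj
  · simp [hv j hj]
  · exact mul_le_mul_of_nonneg_right (hT.eigenvalues_antitone hn hj) (by positivity)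

theorem eigenvalues_mul_le_re_inner_apply_self_of_repr_eq_zero {i : Fin n} {v : E}
    (hv : ∀ j > i, (hT.eigenvectorBasis hn).repr v j = 0) :
    hT.eigenvalues hn i * ‖v‖ ^ 2 ≤ RCLike.re (inner 𝕜 (T v) v) := by
  rw [hT.re_inner_apply_self_eq_sum hn, hT.norm_sq_eq_sum_repr hn, mul_sum]
  refine sum_le_sum fun j _ => ?_
  rcases lt_or_ge i j with hj | hj
  · simp [hv j hj]
  · exact mul_le_mul_of_nonneg_right (hT.eigenvalues_antitone hn hj) (by positivity)

theorem le_eigenvalues_of_forall_le_re_inner (W : Submodule 𝕜 E) {c : ℝ}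
    (hW : ∀ v ∈ W, c * ‖v‖ ^ 2 ≤ RCLike.re (inner 𝕜 (T v) v)) {i : Fin n}
    (hi : (i : ℕ) < finrank 𝕜 W) : c ≤ hT.eigenvalues hn i := by
  by_contra! hlt
  obtain ⟨v, hvW, hv0, hv⟩ := (hT.eigenvectorBasis hn).exists_mem_ne_zero_forall_repr_eq_zero W
    (Iio i) (by rwa [Fin.card_Iio])
  have hupper := hT.re_inner_apply_self_le_of_repr_eq_zero hn fun j hj => hv j (mem_Iio.mpr hj)
  have hpos : 0 < ‖v‖ ^ 2 := by positivity
  nlinarith [hW v hvW]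

theorem eigenvalues_le_of_forall_re_inner_le (W : Submodule 𝕜 E) {c : ℝ}
    (hW : ∀ v ∈ W, RCLike.re (inner 𝕜 (T v) v) ≤ c * ‖v‖ ^ 2) {i : Fin n}
    (hi : n ≤ i + finrank 𝕜 W) : hT.eigenvalues hn i ≤ c := by
  by_contra! hlt
  obtain ⟨v, hvW, hv0, hv⟩ := (hT.eigenvectorBasis hn).exists_mem_ne_zero_forall_repr_eq_zero W
    (Ioi i) (by rw [Fin.card_Ioi]; omega)
  have hlower := hT.eigenvalues_mul_le_re_inner_apply_self_of_repr_eq_zero hn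
    fun j hj => hv j (mem_Ioi.mpr hj)
  have hpos : 0 < ‖v‖ ^ 2 := by positivity
  nlinarith [hW v hvW]

end LinearMap.IsSymmetric

theorem EuclideanSpace.norm_toLp_sq_eq_dotProduct {V : Type*} [Fintype V] (v : V → ℝ) :
    ‖WithLp.toLp 2 v‖ ^ 2 = v ⬝ᵥ v := by
  rw [← real_inner_self_eq_norm_sq, EuclideanSpace.inner_toLp_toLp, star_trivial]

namespace Matrix

variable {V : Type*} [Fintype V] {M : Matrix V V ℝ}

theorem re_inner_toEuclideanLin_toLp (v : V → ℝ) :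
    RCLike.re (inner ℝ (M.toEuclideanLin (WithLp.toLp 2 v)) (WithLp.toLp 2 v)) = v ⬝ᵥ M *ᵥ v := by
  simp [EuclideanSpace.inner_toLp_toLp]

namespace IsHermitian

variable [DecidableEq V] (hM : M.IsHermitian)
include hM

theorem le_eigenvalues₀_of_forall_le_dotProduct (W : Submodule ℝ (V → ℝ)) {c : ℝ}
    (hW : ∀ v ∈ W, c * (v ⬝ᵥ v) ≤ v ⬝ᵥ M *ᵥ v) {i : Fin (Fintype.card V)}
    (hi : (i : ℕ) < finrank ℝ W) : c ≤ hM.eigenvalues₀ i := by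
  refine (isSymmetric_toEuclideanLin_iff.mpr hM).le_eigenvalues_of_forall_le_re_inner
    finrank_euclideanSpace (W.map (EuclideanSpace.equiv V ℝ).symm.toLinearMap) ?_ ?_
  · rintro _ ⟨v, hv, rfl⟩
    have h := hW v hv
    rw [← EuclideanSpace.norm_toLp_sq_eq_dotProduct, ← re_inner_toEuclideanLin_toLp] at h
    exact h
  · rwa [LinearEquiv.finrank_map_eq]

theorem eigenvalues₀_le_of_forall_dotProduct_le (W : Submodule ℝ (V → ℝ)) {c : ℝ}
    (hW : ∀ v ∈ W, v ⬝ᵥ M *ᵥ v ≤ c * (v ⬝ᵥ v)) {i : Fin (Fintype.card V)}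
    (hi : Fintype.card V ≤ i + finrank ℝ W) : hM.eigenvalues₀ i ≤ c := by
  refine (isSymmetric_toEuclideanLin_iff.mpr hM).eigenvalues_le_of_forall_re_inner_le
    finrank_euclideanSpace (W.map (EuclideanSpace.equiv V ℝ).symm.toLinearMap) ?_ ?_
  · rintro _ ⟨v, hv, rfl⟩
    have h := hW v hv
    rw [← EuclideanSpace.norm_toLp_sq_eq_dotProduct, ← re_inner_toEuclideanLin_toLp] at h
    exact h
  · rwa [LinearEquiv.finrank_map_eq]

end IsHermitian

end Matrix

theorem kthEig_eq_eigenvalues₀ {V : Type*} [Fintype V] [DecidableEq V] {M : Matrix V V ℝ}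
    (hM : M.IsHermitian) {k : ℕ} (hk : k - 1 < Fintype.card V) :
    kthEig M k = hM.eigenvalues₀ ⟨k - 1, hk⟩ := by
  rw [kthEig, dif_pos hM, dif_pos hk]
  set f : Fin (Fintype.card V) → ℝ := hM.eigenvalues ∘ (Fintype.equivFin V).symm
  let σ : Equiv.Perm (Fin (Fintype.card V)) :=
    Fin.revPerm.trans ((Fintype.equivOfCardEq (Fintype.card_fin _)).trans (Fintype.equivFin V))
  have hσ : f ∘ σ = hM.eigenvalues₀ ∘ Fin.rev := by
    ext i
    simp [f, σ, Matrix.IsHermitian.eigenvalues]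
  have hsort : f ∘ Tuple.sort f = hM.eigenvalues₀ ∘ Fin.rev := by
    rw [← hσ, eq_comm, Tuple.comp_sort_eq_comp_iff_monotone, hσ]
    exact Antitone.comp hM.eigenvalues₀_antitone Fin.rev_anti
  rw [hsort]
  simp

namespace SimpleGraph

variable {V : Type*} [Fintype V] [DecidableEq V] (G : SimpleGraph V) [DecidableRel G.Adj]

theorem isHermitian_signlessLap : (signlessLap G).IsHermitian :=
  (G.isHermitian_degMatrix (R := ℝ)).add (G.isHermitian_adjMatrix ℝ)

theorem dotProduct_signlessLap_mulVec (x : V → ℝ) :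
    x ⬝ᵥ signlessLap G *ᵥ x = (∑ i, ∑ j, if G.Adj i j then (x i + x j) ^ 2 else 0) / 2 := by
  simp_rw [signlessLap, add_mulVec, dotProduct_add, dotProduct_mulVec_degMatrix,
    dotProduct_mulVec_adjMatrix, ← sum_add_distrib, degree_eq_sum_if_adj, sum_mul, ite_mul,
    one_mul, zero_mul, ← sum_add_distrib, ite_add_ite, add_zero]
  rw [← add_self_div_two (∑ i : V, ∑ j : V, _)]
  conv_lhs => enter [1, 2, 2, i, 2, j]; rw [if_congr (adj_comm G i j) rfl rfl]
  conv_lhs => enter [1, 2]; rw [Finset.sum_comm]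
  simp_rw [← sum_add_distrib, ite_add_ite]
  congr 2 with i
  congr 2 with j
  ring_nf

theorem dotProduct_signlessLap_mulVec_nonneg (x : V → ℝ) : 0 ≤ x ⬝ᵥ signlessLap G *ᵥ x := by
  rw [dotProduct_signlessLap_mulVec]
  have : ∀ i j, 0 ≤ if G.Adj i j then (x i + x j) ^ 2 else 0 := fun i j => by
    split_ifs <;> positivity
  positivity

theorem signlessLap_add_signlessLap_compl :
    signlessLap G + signlessLap Gᶜ = ((Fintype.card V : ℝ) - 2) • 1 + of fun _ _ => 1 := by
  ext i j
  rcases eq_or_ne i j with rfl | hij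
  · have hdeg : (G.degree i : ℝ) + Gᶜ.degree i = Fintype.card V - 1 := by
      have := G.degree_lt_card_verts i
      rw [degree_compl, Nat.sub_sub, Nat.cast_sub (by omega)]
      push_cast
      ring
    simp [signlessLap, degMatrix, hdeg]
    ring
  · by_cases hadj : G.Adj i j <;> simp [signlessLap, degMatrix, hij, hadj]

theorem dotProduct_signlessLap_mulVec_add_compl (x : V → ℝ) :
    x ⬝ᵥ signlessLap G *ᵥ x + x ⬝ᵥ signlessLap Gᶜ *ᵥ x =
      ((Fintype.card V : ℝ) - 2) * (x ⬝ᵥ x) + (∑ i, x i) ^ 2 := by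
  rw [← dotProduct_add, ← add_mulVec, signlessLap_add_signlessLap_compl, add_mulVec, smul_mulVec,
    one_mulVec, dotProduct_add, dotProduct_smul, smul_eq_mul, sq, sum_mul_sum]
  simp [dotProduct, mulVec, mul_sum]

theorem dotProduct_signlessLap_mulVec_le {U W : Finset V}
    (hbip : ∀ u w, G.Adj u w → u ∈ U ∪ W → u ∈ U ∧ w ∈ W ∨ u ∈ W ∧ w ∈ U)
    {x : V → ℝ} (hx : ∀ v ∉ U ∪ W, x v = 0) {s : ℝ}
    (hs : ∀ u ∈ U, ∀ w ∈ W, (x u + x w) ^ 2 ≤ s) :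
    x ⬝ᵥ signlessLap G *ᵥ x ≤ s * #U * #W := by
  let e : V → V → ℝ := fun u w => if u ∈ U ∧ w ∈ W then s else 0
  have he : ∀ u w, 0 ≤ e u w := fun u w => by
    dsimp only [e]
    split_ifs with h
    exacts [(sq_nonneg _).trans (hs u h.1 w h.2), le_rfl]
  have hterm : ∀ i j, (if G.Adj i j then (x i + x j) ^ 2 else 0) ≤ e i j + e j i := by
    intro i j
    by_cases hadj : G.Adj i j
    · rw [if_pos hadj]
      by_cases hi : i ∈ U ∪ W
      · rcases hbip i j hadj hi with ⟨hiU, hjW⟩ | ⟨hiW, hjU⟩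
        · have : e i j = s := if_pos ⟨hiU, hjW⟩
          linarith [hs i hiU j hjW, he j i]
        · have : e j i = s := if_pos ⟨hjU, hiW⟩
          linarith [add_comm (x i) (x j) ▸ hs j hjU i hiW, he i j]
      · have hj : j ∉ U ∪ W := fun hj => by
          rcases hbip j i hadj.symm hj with ⟨-, h⟩ | ⟨-, h⟩ <;> simp [h] at hi
        rw [hx i hi, hx j hj]
        linarith [he i j, he j i]
    · rw [if_neg hadj]
      linarith [he i j, he j i]
  rw [dotProduct_signlessLap_mulVec, div_le_iff₀ two_pos]
  refine (sum_le_sum fun i _ => sum_le_sum fun j _ => hterm i j).trans_eq ?_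
  simp only [e, ite_and, sum_add_distrib, Fintype.sum_ite_mem, sum_ite_irrel, sum_const_zero,
    sum_const, nsmul_eq_mul]
  ring

theorem qEig_two_le (hV : 2 ≤ Fintype.card V) : qEig G 2 ≤ Fintype.card V - 2 := by
  have hQ := G.isHermitian_signlessLap
  rw [qEig, kthEig_eq_eigenvalues₀ hQ (by omega)]
  let sumCoords : Module.Dual ℝ (V → ℝ) := ∑ v, LinearMap.proj v
  have hsumCoords : sumCoords ≠ 0 := by
    obtain ⟨v⟩ : Nonempty V := Fintype.card_pos_iff.mp (by omega)
    intro h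
    simpa [sumCoords] using LinearMap.congr_fun h (Pi.single v 1)
  refine hQ.eigenvalues₀_le_of_forall_dotProduct_le (LinearMap.ker sumCoords) (fun x hx => ?_) ?_
  · have hsum : ∑ i, x i = 0 := by simpa [sumCoords] using hx
    have := G.dotProduct_signlessLap_mulVec_add_compl x
    rw [hsum] at this
    linarith [Gᶜ.dotProduct_signlessLap_mulVec_nonneg x]
  · have := Module.Dual.finrank_ker_add_one_of_ne_zero hsumCoords
    rw [Module.finrank_fintype_fun_eq_card] at this
    rw [Fin.val_mk]
    omega

theorem card_sub_two_mul_le_dotProduct_signlessLap_mulVec {U W : Finset V} (hUW : Disjoint U W)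
    (hcard : #U = #W)
    (hbip : ∀ u w, Gᶜ.Adj u w → u ∈ U ∪ W → u ∈ U ∧ w ∈ W ∨ u ∈ W ∧ w ∈ U)
    {a b : ℝ} {x : V → ℝ}
    (hx : ∀ v, x v = (if v ∈ U then a else 0) + (if v ∈ W then b else 0)) :
    ((Fintype.card V : ℝ) - 2) * (x ⬝ᵥ x) ≤ x ⬝ᵥ signlessLap G *ᵥ x := by
  have hsum : ∑ v, x v = (a + b) * #U := by
    simp only [hx, sum_add_distrib, Fintype.sum_ite_mem, sum_const, nsmul_eq_mul, ← hcard]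
    ring
  have hcompl : x ⬝ᵥ signlessLap Gᶜ *ᵥ x ≤ (a + b) ^ 2 * #U * #W := by
    refine Gᶜ.dotProduct_signlessLap_mulVec_le hbip (fun v hv => ?_) fun u hu w hw => ?_
    · rw [hx, if_neg fun h => hv (mem_union_left _ h), if_neg fun h => hv (mem_union_right _ h),
        add_zero]
    · simp [hx, hu, hw, Finset.disjoint_left.mp hUW hu, Finset.disjoint_right.mp hUW hw]
  have hsplit := G.dotProduct_signlessLap_mulVec_add_compl x
  rw [hsum] at hsplit
  rw [← hcard] at hcompl
  linarith [show ((a + b) * #U) ^ 2 = (a + b) ^ 2 * #U * #U by ring]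

theorem card_sub_two_le_qEig_two {U W : Finset V} (hU : U.Nonempty) (hUW : Disjoint U W)
    (hcard : #U = #W)
    (hbip : ∀ u w, Gᶜ.Adj u w → u ∈ U ∪ W → u ∈ U ∧ w ∈ W ∨ u ∈ W ∧ w ∈ U) :
    (Fintype.card V : ℝ) - 2 ≤ qEig G 2 := by
  obtain ⟨u₀, hu₀⟩ := hU
  obtain ⟨w₀, hw₀⟩ : W.Nonempty := by rw [← card_pos, ← hcard]; exact card_pos.mpr ⟨u₀, hu₀⟩
  have hV : 2 ≤ Fintype.card V := by
    have := card_union_of_disjoint hUW ▸ card_le_univ (U ∪ W)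
    have := card_pos.mpr ⟨u₀, hu₀⟩
    omega
  have hQ := G.isHermitian_signlessLap
  rw [qEig, kthEig_eq_eigenvalues₀ hQ (by omega)]
  let χ : Finset V → V → ℝ := fun S v => if v ∈ S then 1 else 0
  have hχ : ∀ a b v, (a • χ U + b • χ W) v = (if v ∈ U then a else 0) + (if v ∈ W then b else 0) :=
    fun a b v => by simp [χ]
  refine hQ.le_eigenvalues₀_of_forall_le_dotProduct (Submodule.span ℝ {χ U, χ W})
    (fun x hx => ?_) ?_
  · obtain ⟨a, b, rfl⟩ := Submodule.mem_span_pair.mp hx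
    exact G.card_sub_two_mul_le_dotProduct_signlessLap_mulVec hUW hcard hbip (hχ a b)
  · have hli : LinearIndependent ℝ ![χ U, χ W] := LinearIndependent.pair_iff.mpr fun a b hab =>
      ⟨by simpa [hχ, hu₀, Finset.disjoint_left.mp hUW hu₀] using congrFun hab u₀,
        by simpa [hχ, hw₀, Finset.disjoint_right.mp hUW hw₀] using congrFun hab w₀⟩
    rw [← Matrix.range_cons_cons_empty, finrank_span_eq_card hli]
    simp

end SimpleGraph

theorem IsBalancedBipartiteComponent.exists_finsets {V : Type*} [Fintype V] [DecidableEq V]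
    {H : SimpleGraph V} {c : H.ConnectedComponent} (h : IsBalancedBipartiteComponent H c) :
    ∃ U W : Finset V, U.Nonempty ∧ Disjoint U W ∧ #U = #W ∧
      ∀ u w, H.Adj u w → u ∈ U ∪ W → u ∈ U ∧ w ∈ W ∨ u ∈ W ∧ w ∈ U := by
  obtain ⟨U, W, hsupp, hUW, hcard, hbip⟩ := h
  have hU : U.Nonempty := by
    obtain ⟨v, hv⟩ := c.nonempty_supp
    rcases hsupp ▸ hv with hvU | hvW
    · exact ⟨v, hvU⟩
    · exact Set.nonempty_of_ncard_ne_zero (hcard ▸ ((Set.ncard_pos).mpr ⟨v, hvW⟩).ne')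
  refine ⟨U.toFinset, W.toFinset, by simpa using hU, by simpa using hUW, ?_, fun u w hadj hu => ?_⟩
  · rwa [← Set.ncard_eq_toFinset_card', ← Set.ncard_eq_toFinset_card']
  · simpa using hbip (hsupp ▸ by simpa using hu) hadj

/-- If `G` is a graph of order `n ≥ 2` whose complement has a balanced bipartite
component, then `q₂(G) = n - 2`. -/
theorem q2_eq_of_balanced_bipartite_component (n : ℕ) (hn : 2 ≤ n)
    (G : SimpleGraph (Fin n)) [DecidableRel G.Adj]
    (h : ∃ c : Gᶜ.ConnectedComponent, IsBalancedBipartiteComponent Gᶜ c) :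
    qEig G 2 = (n : ℝ) - 2 := by
  obtain ⟨c, hc⟩ := h
  obtain ⟨U, W, hU, hUW, hcard, hbip⟩ := hc.exists_finsets
  have hupper := G.qEig_two_le (by simpa using hn)
  have hlower := G.card_sub_two_le_qEig_two hU hUW hcard hbip
  rw [Fintype.card_fin] at hupper hlower
  exact le_antisymm hupper hlower
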